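/- arXiv:1909.00880 — 2 statements merged into one kernel-verified Lean document; each statement's English description precedes it below -/
import Mathlib

section
/- Let p(t) = a t² + 2b(1−t)t + c(1−t)² be a quadratic Bernstein–Bézier polynomial on [0,1]. Then p(t) > 0 for all t ∈ [0,1] if and only if a > 0, c > 0, and b + √(ac) > 0. -/
/-!
For `a, c ≥ 0` the polynomial is `(√a t - √c (1 - t))² + 2 (b + √(ac)) t (1 - t)`.
This gives positivity on `(0, 1)` when `b + √(ac) > 0`, while the endpoints give `c` and `a`.
Conversely, at the point `t = √c / (√a + √c)` of `(0, 1)` the square vanishes, which forces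
`b + √(ac) > 0`.
-/

open Real

def bezierQuad (a b c t : ℝ) : ℝ :=
  a * t ^ 2 + 2 * b * (1 - t) * t + c * (1 - t) ^ 2

section bezierQuad

variable {a c : ℝ}

@[simp]
lemma bezierQuad_zero (a b c : ℝ) : bezierQuad a b c 0 = c := by
  simp [bezierQuad]

@[simp]
lemma bezierQuad_one (a b c : ℝ) : bezierQuad a b c 1 = a := by
  simp [bezierQuad]

lemma bezierQuad_eq_sq_add (ha : 0 ≤ a) (hc : 0 ≤ c) (b t : ℝ) :
    bezierQuad a b c t =
      (√a * t - √c * (1 - t)) ^ 2 + 2 * (b + √(a * c)) * (t * (1 - t)) := by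
  rw [bezierQuad, sqrt_mul ha]
  linear_combination (-t ^ 2) * sq_sqrt ha - (1 - t) ^ 2 * sq_sqrt hc

lemma bezierQuad_pos (ha : 0 < a) (hc : 0 < c) {b : ℝ} (hb : 0 < b + √(a * c)) {t : ℝ}
    (ht : t ∈ Set.Icc (0 : ℝ) 1) : 0 < bezierQuad a b c t := by
  obtain rfl | ht₀ := ht.1.eq_or_lt
  · simpa using hc
  obtain rfl | ht₁ := ht.2.eq_or_lt
  · simpa using ha
  rw [bezierQuad_eq_sq_add ha.le hc.le]
  have : 0 < t * (1 - t) := mul_pos ht₀ (sub_pos.2 ht₁)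
  positivity

end bezierQuad

lemma exists_mem_Ioo_mul_eq_mul_one_sub {α γ : ℝ} (hα : 0 < α) (hγ : 0 < γ) :
    ∃ t ∈ Set.Ioo (0 : ℝ) 1, α * t = γ * (1 - t) := by
  have hsum : 0 < α + γ := add_pos hα hγ
  refine ⟨γ / (α + γ), ⟨div_pos hγ hsum, (div_lt_one hsum).2 (by linarith)⟩, ?_⟩
  field_simp
  ring

theorem bernstein_bezier_pos (a b c : ℝ) :
    (∀ t ∈ Set.Icc (0 : ℝ) 1, 0 < a * t ^ 2 + 2 * b * (1 - t) * t + c * (1 - t) ^ 2) ↔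
      (0 < a ∧ 0 < c ∧ 0 < b + Real.sqrt (a * c)) := by
  refine ⟨fun h => ?_, fun ⟨ha, hc, hb⟩ t ht => bezierQuad_pos ha hc hb ht⟩
  have ha : 0 < a := by simpa using (h 1 (by simp) : 0 < bezierQuad a b c 1)
  have hc : 0 < c := by simpa using (h 0 (by simp) : 0 < bezierQuad a b c 0)
  obtain ⟨t, ⟨ht₀, ht₁⟩, hbal⟩ :=
    exists_mem_Ioo_mul_eq_mul_one_sub (sqrt_pos.2 ha) (sqrt_pos.2 hc)
  have hpos : 0 < bezierQuad a b c t := h t ⟨ht₀.le, ht₁.le⟩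
  rw [bezierQuad_eq_sq_add ha.le hc.le, hbal, sub_self, zero_pow two_ne_zero, zero_add] at hpos
  have hb : 0 < 2 * (b + √(a * c)) :=
    (mul_pos_iff_of_pos_right (mul_pos ht₀ (sub_pos.2 ht₁))).1 hpos
  exact ⟨ha, hc, by linarith⟩
end

section
/- Let A be a 4th order 2-dimensional symmetric tensor. If a₁₁₁₁ ≥ 0, a₂₂₂₂ ≥ 0, a₁₁₁₂ + (a₁₁₁₁³ a₂₂₂₂)^(1/4) ≥ 0, a₂₂₂₁ + (a₁₁₁₁ a₂₂₂₂³)^(1/4) ≥ 0, and 3(a₁₂₂₁ − √(a₁₁₁₁a₂₂₂₂)) + 4√((a₁₁₁₂ + (a₁₁₁₁³a₂₂₂₂)^(1/4))(a₂₂₂₁ + (a₁₁₁₁a₂₂₂₂³)^(1/4))) ≥ 0, then A is copositive; with strict inequalities, A is strictly copositive. -/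
/-!
With `α = a₁₁₁₁^(1/4)`, `δ = a₂₂₂₂^(1/4)`, `u = √(a₁₁₁₂ + α³δ)` and `v = √(a₂₂₂₁ + αδ³)`,
the form is a sum of squares on the nonnegative quadrant:
`Ax⁴ = (αx₁ - δx₂)⁴ + 4x₁x₂(ux₁ - vx₂)² + 2s·x₁²x₂²`, where
`s = 3(a₁₂₂₁ - α²δ²) + 4uv` is the last quantity in the hypotheses.
-/

open Real

section CommRing

variable {R : Type*} [CommRing R]

def binaryQuartic (a b c d e x y : R) : R :=
  a * x ^ 4 + 4 * b * x ^ 3 * y + 6 * c * x ^ 2 * y ^ 2 + 4 * d * x * y ^ 3 + e * y ^ 4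

theorem binaryQuartic_zero_left (a b c d e y : R) : binaryQuartic a b c d e 0 y = e * y ^ 4 := by
  simp [binaryQuartic]

theorem binaryQuartic_zero_right (a b c d e x : R) : binaryQuartic a b c d e x 0 = a * x ^ 4 := by
  simp [binaryQuartic]

theorem binaryQuartic_eq_sos (c α δ u v x y : R) :
    binaryQuartic (α ^ 4) (u ^ 2 - α ^ 3 * δ) c (v ^ 2 - α * δ ^ 3) (δ ^ 4) x y =
      (α * x - δ * y) ^ 4 + 4 * x * y * (u * x - v * y) ^ 2
        + 2 * (3 * (c - α ^ 2 * δ ^ 2) + 4 * (u * v)) * x ^ 2 * y ^ 2 := by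
  unfold binaryQuartic; ring

end CommRing

section OrderedRing

variable {R : Type*} [CommRing R] [LinearOrder R] [IsStrictOrderedRing R]

theorem binaryQuartic_pos_of_interior_pos {a b c d e x y : R} (ha : 0 < a) (he : 0 < e)
    (hpos : ∀ x y : R, 0 < x → 0 < y → 0 < binaryQuartic a b c d e x y)
    (hx : 0 ≤ x) (hy : 0 ≤ y) (hxy : ¬(x = 0 ∧ y = 0)) : 0 < binaryQuartic a b c d e x y := by
  rcases hx.eq_or_lt with rfl | hx
  · have hy : 0 < y := hy.lt_of_ne (by tauto)
    rw [binaryQuartic_zero_left]; positivity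
  rcases hy.eq_or_lt with rfl | hy
  · rw [binaryQuartic_zero_right]; positivity
  exact hpos x y hx hy

theorem binaryQuartic_sos_nonneg {c α δ u v x y : R} (hx : 0 ≤ x) (hy : 0 ≤ y)
    (hc : 0 ≤ 3 * (c - α ^ 2 * δ ^ 2) + 4 * (u * v)) :
    0 ≤ binaryQuartic (α ^ 4) (u ^ 2 - α ^ 3 * δ) c (v ^ 2 - α * δ ^ 3) (δ ^ 4) x y := by
  rw [binaryQuartic_eq_sos]; positivity

theorem binaryQuartic_sos_pos {c α δ u v x y : R} (hx : 0 < x) (hy : 0 < y)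
    (hc : 0 < 3 * (c - α ^ 2 * δ ^ 2) + 4 * (u * v)) :
    0 < binaryQuartic (α ^ 4) (u ^ 2 - α ^ 3 * δ) c (v ^ 2 - α * δ ^ 3) (δ ^ 4) x y := by
  rw [binaryQuartic_eq_sos]; positivity

end OrderedRing

theorem rpow_one_div_four_pow_four {a : ℝ} (ha : 0 ≤ a) : (a ^ ((1 : ℝ) / 4)) ^ 4 = a := by
  simpa using rpow_inv_natCast_pow ha four_ne_zero

theorem exists_binaryQuartic_sos_params {a b c d e : ℝ} (ha : 0 ≤ a) (he : 0 ≤ e)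
    (hb : 0 ≤ b + (a ^ 3 * e) ^ ((1 : ℝ) / 4)) (hd : 0 ≤ d + (a * e ^ 3) ^ ((1 : ℝ) / 4)) :
    ∃ α δ u v : ℝ, a = α ^ 4 ∧ b = u ^ 2 - α ^ 3 * δ ∧ d = v ^ 2 - α * δ ^ 3 ∧ e = δ ^ 4 ∧
      3 * (c - √(a * e))
          + 4 * √((b + (a ^ 3 * e) ^ ((1 : ℝ) / 4)) * (d + (a * e ^ 3) ^ ((1 : ℝ) / 4)))
        = 3 * (c - α ^ 2 * δ ^ 2) + 4 * (u * v) := by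
  set α := a ^ ((1 : ℝ) / 4)
  set δ := e ^ ((1 : ℝ) / 4)
  have hα : α ^ 4 = a := rpow_one_div_four_pow_four ha
  have hδ : δ ^ 4 = e := rpow_one_div_four_pow_four he
  have h31 : (a ^ 3 * e) ^ ((1 : ℝ) / 4) = α ^ 3 * δ := by
    rw [mul_rpow (by positivity) he, ← rpow_pow_comm ha]
  have h13 : (a * e ^ 3) ^ ((1 : ℝ) / 4) = α * δ ^ 3 := by
    rw [mul_rpow ha (by positivity), ← rpow_pow_comm he]
  have hae : √(a * e) = α ^ 2 * δ ^ 2 := by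
    rw [← hα, ← hδ, show α ^ 4 * δ ^ 4 = (α ^ 2 * δ ^ 2) ^ 2 by ring, sqrt_sq (by positivity)]
  rw [h31] at hb ⊢
  rw [h13] at hd ⊢
  refine ⟨α, δ, √(b + α ^ 3 * δ), √(d + α * δ ^ 3), hα.symm, ?_, ?_, hδ.symm, ?_⟩
  · rw [sq_sqrt hb]; ring
  · rw [sq_sqrt hd]; ring
  · rw [hae, sqrt_mul hb]

theorem copositive_dim2_sufficient' (a1111 a1112 a1221 a2221 a2222 : ℝ) :
    ((0 ≤ a1111 ∧ 0 ≤ a2222 ∧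
        0 ≤ a1112 + (a1111 ^ 3 * a2222) ^ ((1:ℝ)/4) ∧
        0 ≤ a2221 + (a1111 * a2222 ^ 3) ^ ((1:ℝ)/4) ∧
        0 ≤ 3 * (a1221 - Real.sqrt (a1111 * a2222))
            + 4 * Real.sqrt ((a1112 + (a1111 ^ 3 * a2222) ^ ((1:ℝ)/4))
                * (a2221 + (a1111 * a2222 ^ 3) ^ ((1:ℝ)/4)))) →
      ∀ x1 x2 : ℝ, 0 ≤ x1 → 0 ≤ x2 →
        0 ≤ a1111 * x1 ^ 4 + 4 * a1112 * x1 ^ 3 * x2 + 6 * a1221 * x1 ^ 2 * x2 ^ 2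
            + 4 * a2221 * x1 * x2 ^ 3 + a2222 * x2 ^ 4) ∧
    ((0 < a1111 ∧ 0 < a2222 ∧
        0 < a1112 + (a1111 ^ 3 * a2222) ^ ((1:ℝ)/4) ∧
        0 < a2221 + (a1111 * a2222 ^ 3) ^ ((1:ℝ)/4) ∧
        0 < 3 * (a1221 - Real.sqrt (a1111 * a2222))
            + 4 * Real.sqrt ((a1112 + (a1111 ^ 3 * a2222) ^ ((1:ℝ)/4))
                * (a2221 + (a1111 * a2222 ^ 3) ^ ((1:ℝ)/4)))) →
      ∀ x1 x2 : ℝ, 0 ≤ x1 → 0 ≤ x2 → ¬(x1 = 0 ∧ x2 = 0) →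
        0 < a1111 * x1 ^ 4 + 4 * a1112 * x1 ^ 3 * x2 + 6 * a1221 * x1 ^ 2 * x2 ^ 2
            + 4 * a2221 * x1 * x2 ^ 3 + a2222 * x2 ^ 4) := by
  constructor
  · rintro ⟨ha, he, hb, hd, hc⟩ x1 x2 hx1 hx2
    obtain ⟨α, δ, u, v, rfl, rfl, rfl, rfl, hmargin⟩ :=
      exists_binaryQuartic_sos_params (c := a1221) ha he hb hd
    exact binaryQuartic_sos_nonneg hx1 hx2 (hmargin ▸ hc)
  · rintro ⟨ha, he, hb, hd, hc⟩ x1 x2 hx1 hx2 hx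
    refine binaryQuartic_pos_of_interior_pos ha he (fun x y hx hy => ?_) hx1 hx2 hx
    obtain ⟨α, δ, u, v, rfl, rfl, rfl, rfl, hmargin⟩ :=
      exists_binaryQuartic_sos_params (c := a1221) ha.le he.le hb.le hd.le
    exact binaryQuartic_sos_pos hx hy (hmargin ▸ hc)
end
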